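/- At error probability r = 10⁻⁴, there exists an input distribution q on the 64 codons whose mutual information through the ribosome channel exceeds 4.39 bits per use; hence C(10⁻⁴) > 4.39, a value lying strictly between g(10⁻⁴) and the upper bound log₂ 21. -/

import Mathlib

open Finset

/-- The ribosome channel: probability of output `y` given input codon `x`,
with error probability `r` and genetic code `G`. -/
noncomputable def rib (G : Fin 64 → Fin 21) (r : ℝ) (y : Fin 21) (x : Fin 64) : ℝ :=
  if y = G x then 1 - r else r / 20

/-- Mutual information (in bits) of the ribosome channel at input distribution `q`.
Note `Real.logb 2 0 = 0`, which realizes the convention `0 · log₂ 0 = 0`. -/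
noncomputable def mutualInfo (G : Fin 64 → Fin 21) (r : ℝ) (q : Fin 64 → ℝ) : ℝ :=
  ∑ x : Fin 64, ∑ y : Fin 21,
    q x * rib G r y x *
      Real.logb 2 (rib G r y x / ∑ x' : Fin 64, q x' * rib G r y x')

/-- `q` is a probability distribution on the 64 codons. -/
def IsDist (q : Fin 64 → ℝ) : Prop := (∀ x, 0 ≤ q x) ∧ ∑ x : Fin 64, q x = 1

/-- The channel capacity: supremum of the mutual information over all input distributions. -/
noncomputable def capacity (G : Fin 64 → Fin 21) (r : ℝ) : ℝ :=
  sSup {c : ℝ | ∃ q : Fin 64 → ℝ, IsDist q ∧ c = mutualInfo G r q}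

/-- `G` has the fiber sizes of the standard genetic code: exactly 2 outputs have a
fiber of size 1, 9 of size 2, 2 of size 3, 5 of size 4, and 3 of size 6. -/
def FiberCode (G : Fin 64 → Fin 21) : Prop :=
  ((univ.filter fun y : Fin 21 => (univ.filter fun x : Fin 64 => G x = y).card = 1).card = 2) ∧
  ((univ.filter fun y : Fin 21 => (univ.filter fun x : Fin 64 => G x = y).card = 2).card = 9) ∧
  ((univ.filter fun y : Fin 21 => (univ.filter fun x : Fin 64 => G x = y).card = 3).card = 2) ∧
  ((univ.filter fun y : Fin 21 => (univ.filter fun x : Fin 64 => G x = y).card = 4).card = 5) ∧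
  ((univ.filter fun y : Fin 21 => (univ.filter fun x : Fin 64 => G x = y).card = 6).card = 3)

/-- The lower-bound function `g` of Theorem II.1 (base-2 logarithms; since
`Real.logb 2 0 = 0`, terms of the form `0 · log₂ 0` vanish as intended). -/
noncomputable def g (r : ℝ) : ℝ :=
  (1/64) * (2*(1-r) * Real.logb 2 (1280*(1-r)/(43*r+20))
    + (63*r/10) * Real.logb 2 (64*r/(43*r+20))
    + 18*(1-r) * Real.logb 2 (640*(1-r)/(11*r+20))
    + (279*r/10) * Real.logb 2 (32*r/(11*r+20))
    + 6*(1-r) * Real.logb 2 (1280*(1-r)/(r+60))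
    + (61*r/10) * Real.logb 2 (64*r/(r+60))
    + 20*(1-r) * Real.logb 2 (64*(1-r)/(4-r))
    + 15*r * Real.logb 2 (16*r/(5*(4-r)))
    + 18*(1-r) * Real.logb 2 (640*(1-r)/(60-31*r))
    + (87*r/10) * Real.logb 2 (32*r/(60-31*r)))

/-!
Since the fiber counts `2 + 9 + 2 + 5 + 3` exhaust all 21 outputs, `G` is surjective. Feeding the
ribosome channel the uniform distribution on a section of `G` (one codon per output) turns it into
the 21-ary symmetric channel with error `r`, whose rate
`log₂ 21 + (1 - r) log₂ (1 - r) + r log₂ (r / 20)` is about `4.3903` at `r = 10⁻⁴`.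
The capacity is at least this rate because the mutual information is bounded: each term
`q(x) p(y|x) log₂ (p(y|x) / p(y))` is at most `p(y|x) / ln 2`, as `q(x) p(y|x) ≤ p(y)` and
`log t ≤ t`. The comparisons with `g (10⁻⁴)` and `log₂ 21` are numerical.
-/

open Real

theorem surjective_of_sum_card_filter_card_fiber_eq {α β : Type*} [Fintype α] [Fintype β]
    [DecidableEq β] {f : α → β} {K : Finset ℕ} (hK : 0 ∉ K)
    (h : ∑ k ∈ K, #{y | #{x | f x = y} = k} = Fintype.card β) : Function.Surjective f := by
  have hsum : #{y | #{x | f x = y} ∈ K} = ∑ k ∈ K, #{y | #{x | f x = y} = k} := by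
    refine (card_eq_sum_card_fiberwise (f := fun y => #{x | f x = y})
      fun y hy => (mem_filter.1 hy).2).trans (sum_congr rfl fun k hk => congrArg card ?_)
    ext y
    simp only [mem_filter, mem_univ, true_and, and_iff_right_iff_imp]
    exact fun hy => hy ▸ hk
  rw [h, ← card_univ, card_filter_eq_iff] at hsum
  intro y
  have hy : #{x | f x = y} ≠ 0 := fun h0 => hK (h0 ▸ hsum y (mem_univ y))
  obtain ⟨x, hx⟩ := card_ne_zero.1 hy
  exact ⟨x, (mem_filter.1 hx).2⟩

theorem surjective_of_fiberCode {G : Fin 64 → Fin 21} (hG : FiberCode G) :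
    Function.Surjective G := by
  obtain ⟨h1, h2, h3, h4, h6⟩ := hG
  refine surjective_of_sum_card_filter_card_fiber_eq (K := {1, 2, 3, 4, 6}) (by decide) ?_
  rw [sum_insert (by decide), sum_insert (by decide), sum_insert (by decide),
    sum_insert (by decide), sum_singleton, h1, h2, h3, h4, h6]
  rfl

theorem Fintype.sum_ite_eq_add {ι M : Type*} [Fintype ι] [DecidableEq ι] [AddCommMonoid M]
    (z : ι) (a b : M) : ∑ y, (if y = z then a else b) = a + (Fintype.card ι - 1) • b := by
  rw [← add_sum_erase _ _ (mem_univ z), if_pos rfl, ← card_univ,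
    ← card_erase_of_mem (mem_univ z), ← sum_const]
  exact congrArg _ (Finset.sum_congr rfl fun y hy => if_neg (ne_of_mem_erase hy))

theorem rib_of_eq {G : Fin 64 → Fin 21} {x : Fin 64} {z : Fin 21} (hx : G x = z) (r : ℝ)
    (y : Fin 21) : rib G r y x = if y = z then 1 - r else r / 20 := by
  rw [rib, hx]

theorem sum_rib (G : Fin 64 → Fin 21) (r : ℝ) (x : Fin 64) : ∑ y, rib G r y x = 1 := by
  simp only [rib_of_eq rfl, Fintype.sum_ite_eq_add, Fintype.card_fin]
  ring

noncomputable def pushforwardUniform (h : Fin 21 → Fin 64) (x : Fin 64) : ℝ :=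
  ∑ z, if h z = x then 1 / 21 else 0

theorem sum_pushforwardUniform_mul (h : Fin 21 → Fin 64) (F : Fin 64 → ℝ) :
    ∑ x, pushforwardUniform h x * F x = (∑ z, F (h z)) / 21 := by
  simp only [pushforwardUniform, sum_mul, ite_mul, zero_mul, sum_div]
  rw [sum_comm]
  simp [div_eq_inv_mul]

theorem isDist_pushforwardUniform (h : Fin 21 → Fin 64) : IsDist (pushforwardUniform h) :=
  ⟨fun _ => sum_nonneg fun _ _ => by positivity,
    by simpa using sum_pushforwardUniform_mul h 1⟩

noncomputable def symmetricChannelCapacity (r : ℝ) : ℝ :=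
  (1 - r) * logb 2 (21 * (1 - r)) + r * logb 2 (21 * (r / 20))

theorem mutualInfo_pushforwardUniform {G : Fin 64 → Fin 21} {h : Fin 21 → Fin 64}
    (hGh : ∀ z, G (h z) = z) (r : ℝ) :
    mutualInfo G r (pushforwardUniform h) = symmetricChannelCapacity r := by
  have hout : ∀ y, ∑ x, pushforwardUniform h x * rib G r y x = 1 / 21 := by
    intro y
    simp only [sum_pushforwardUniform_mul, rib_of_eq (hGh _), eq_comm (a := y),
      Fintype.sum_ite_eq_add, Fintype.card_fin]
    norm_num
    ring
  have hterm : ∀ z y, rib G r y (h z) * logb 2 (rib G r y (h z) / (1 / 21)) =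
      if y = z then (1 - r) * logb 2 (21 * (1 - r)) else r / 20 * logb 2 (21 * (r / 20)) := by
    intro z y
    rw [rib_of_eq (hGh z)]
    split_ifs <;> ring_nf
  simp only [mutualInfo, hout, mul_assoc, ← mul_sum]
  rw [sum_pushforwardUniform_mul]
  simp only [hterm, Fintype.sum_ite_eq_add, Fintype.card_fin, sum_const, card_univ]
  rw [symmetricChannelCapacity]
  norm_num
  ring

theorem mul_logb_div_le {c a b d : ℝ} (hc : 1 < c) (ha : 0 ≤ a) (had : a ≤ d) (hb : 0 ≤ b) :
    a * logb c (b / d) ≤ b / log c := by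
  have hlogc : 0 < log c := log_pos hc
  rcases (ha.trans had).eq_or_lt with rfl | hd
  · rw [div_zero, logb_zero, mul_zero]
    positivity
  · calc a * logb c (b / d) = a * log (b / d) / log c := by rw [logb, mul_div_assoc]
      _ ≤ a * (b / d) / log c := by gcongr; exact log_le_self (by positivity)
      _ ≤ b / log c := by
        gcongr
        rw [mul_div_assoc', div_le_iff₀ hd]
        exact (mul_le_mul_of_nonneg_right had hb).trans_eq (mul_comm d b)

theorem rib_nonneg (G : Fin 64 → Fin 21) {r : ℝ} (hr0 : 0 ≤ r) (hr1 : r ≤ 1) (y : Fin 21)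
    (x : Fin 64) : 0 ≤ rib G r y x := by
  unfold rib
  split_ifs <;> linarith

theorem mutualInfo_le_div_log_two (G : Fin 64 → Fin 21) {r : ℝ} (hr0 : 0 ≤ r) (hr1 : r ≤ 1)
    {q : Fin 64 → ℝ} (hq : IsDist q) : mutualInfo G r q ≤ 64 / log 2 := by
  have hterm (x : Fin 64) (y : Fin 21) : q x * rib G r y x ≤ ∑ x', q x' * rib G r y x' :=
    single_le_sum (f := fun x' => q x' * rib G r y x')
      (fun x' _ => mul_nonneg (hq.1 x') (rib_nonneg G hr0 hr1 y x')) (mem_univ x)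
  calc mutualInfo G r q ≤ ∑ x : Fin 64, ∑ y, rib G r y x / log 2 :=
        sum_le_sum fun x _ => sum_le_sum fun y _ => mul_logb_div_le one_lt_two
          (mul_nonneg (hq.1 x) (rib_nonneg G hr0 hr1 y x)) (hterm x y) (rib_nonneg G hr0 hr1 y x)
    _ = 64 / log 2 := by
      simp only [← sum_div, sum_rib, sum_const, card_univ, Fintype.card_fin]
      norm_num

theorem mutualInfo_le_capacity (G : Fin 64 → Fin 21) {r : ℝ} (hr0 : 0 ≤ r) (hr1 : r ≤ 1)
    {q : Fin 64 → ℝ} (hq : IsDist q) : mutualInfo G r q ≤ capacity G r :=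
  le_csSup
    ⟨64 / log 2, fun _ ⟨_, hq', hc⟩ => hc ▸ mutualInfo_le_div_log_two G hr0 hr1 hq'⟩
    ⟨q, hq, rfl⟩

theorem logb_le_div_of_pow_le {b x : ℝ} (hb : 1 < b) (hx : 0 < x) {m n : ℕ} (hn : 0 < n)
    (h : x ^ n ≤ b ^ m) : logb b x ≤ m / n := by
  have := (logb_le_logb hb (pow_pos hx n) (pow_pos (zero_lt_one.trans hb) m)).2 h
  rw [logb_pow, logb_pow, logb_self_eq_one hb, mul_one] at this
  rw [le_div_iff₀ (by positivity)]
  linarith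

theorem div_le_logb_of_le_pow {b x : ℝ} (hb : 1 < b) (hx : 0 < x) {m n : ℕ} (hn : 0 < n)
    (h : b ^ m ≤ x ^ n) : (m : ℝ) / n ≤ logb b x := by
  have := (logb_le_logb hb (pow_pos (zero_lt_one.trans hb) m) (pow_pos hx n)).2 h
  rw [logb_pow, logb_pow, logb_self_eq_one hb, mul_one] at this
  rw [div_le_iff₀ (by positivity)]
  linarith

theorem lt_logb_two_twentyOne : (4.39 : ℝ) < logb 2 21 :=
  calc (4.39 : ℝ) < (224 : ℕ) / (51 : ℕ) := by norm_num
    _ ≤ logb 2 21 := div_le_logb_of_le_pow one_lt_two (by norm_num) (by norm_num) (by norm_num)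

theorem lt_symmetricChannelCapacity_one_div_ten_thousand :
    (4.39 : ℝ) < symmetricChannelCapacity (1 / 10000) := by
  have hmain : ((224 : ℕ) : ℝ) / (51 : ℕ) ≤ logb 2 (21 * (1 - 1 / 10000)) :=
    div_le_logb_of_le_pow one_lt_two (by norm_num) (by norm_num) (by norm_num)
  have herr : logb 2 ((21 * (1 / 10000 / 20))⁻¹) ≤ ((14 : ℕ) : ℝ) / (1 : ℕ) :=
    logb_le_div_of_pow_le one_lt_two (by norm_num) (by norm_num) (by norm_num)
  rw [logb_inv] at herr
  rw [symmetricChannelCapacity]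
  norm_num at hmain herr ⊢
  linarith

-- The ten terms of `g` pair up by fiber size `1, 2, 3, 4, 6`; the `r`-terms are negative.
theorem g_one_div_ten_thousand_lt : g (1 / 10000) < 4.39 := by
  have hb : (1 : ℝ) < 2 := one_lt_two
  have hsize1 := logb_le_div_of_pow_le hb
    (x := 1280 * (1 - 1 / 10000) / (43 * (1 / 10000) + 20))
    (m := 6) (n := 1) (by norm_num) (by norm_num) (by norm_num)
  have hsize2 := logb_le_div_of_pow_le hb
    (x := 640 * (1 - 1 / 10000) / (11 * (1 / 10000) + 20))
    (m := 5) (n := 1) (by norm_num) (by norm_num) (by norm_num)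
  have hsize3 := logb_le_div_of_pow_le hb
    (x := 1280 * (1 - 1 / 10000) / (1 / 10000 + 60))
    (m := 9) (n := 2) (by norm_num) (by norm_num) (by norm_num)
  have hsize4 := logb_le_div_of_pow_le hb
    (x := 64 * (1 - 1 / 10000) / (4 - 1 / 10000))
    (m := 4) (n := 1) (by norm_num) (by norm_num) (by norm_num)
  have hsize6 := logb_le_div_of_pow_le hb
    (x := 640 * (1 - 1 / 10000) / (60 - 31 * (1 / 10000)))
    (m := 7) (n := 2) (by norm_num) (by norm_num) (by norm_num)
  have herr1 : logb 2 (64 * (1 / 10000) / (43 * (1 / 10000) + 20)) ≤ 0 :=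
    logb_nonpos hb (by norm_num) (by norm_num)
  have herr2 : logb 2 (32 * (1 / 10000) / (11 * (1 / 10000) + 20)) ≤ 0 :=
    logb_nonpos hb (by norm_num) (by norm_num)
  have herr3 : logb 2 (64 * (1 / 10000) / (1 / 10000 + 60)) ≤ 0 :=
    logb_nonpos hb (by norm_num) (by norm_num)
  have herr4 : logb 2 (16 * (1 / 10000) / (5 * (4 - 1 / 10000))) ≤ 0 :=
    logb_nonpos hb (by norm_num) (by norm_num)
  have herr6 : logb 2 (32 * (1 / 10000) / (60 - 31 * (1 / 10000))) ≤ 0 :=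
    logb_nonpos hb (by norm_num) (by norm_num)
  rw [g]
  norm_num at *
  linarith

/-- At `r = 10⁻⁴` there is an input distribution whose mutual information through the
ribosome channel exceeds `4.39` bits per use; hence `C(10⁻⁴) > 4.39`, which lies
strictly between `g(10⁻⁴)` and the upper bound `log₂ 21`. -/
theorem ribosome_capacity_near_upper_bound (G : Fin 64 → Fin 21) (hG : FiberCode G) :
    (∃ q : Fin 64 → ℝ, IsDist q ∧ (4.39 : ℝ) < mutualInfo G (1 / 10000) q) ∧
      (4.39 : ℝ) < capacity G (1 / 10000) ∧
      g (1 / 10000) < (4.39 : ℝ) ∧ (4.39 : ℝ) < Real.logb 2 21 := by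
  obtain ⟨h, hGh⟩ := (surjective_of_fiberCode hG).hasRightInverse
  have hq := isDist_pushforwardUniform h
  have hmi : (4.39 : ℝ) < mutualInfo G (1 / 10000) (pushforwardUniform h) :=
    (mutualInfo_pushforwardUniform hGh _).symm ▸ lt_symmetricChannelCapacity_one_div_ten_thousand
  exact ⟨⟨_, hq, hmi⟩, hmi.trans_le (mutualInfo_le_capacity G (by norm_num) (by norm_num) hq),
    g_one_div_ten_thousand_lt, lt_logb_two_twentyOne⟩
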